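/- For every subset T of 2^ℕ of cardinality 2^{ℵ₀} there exist a set H ⊆ T × 2^ℕ intersecting each vertical section {t} × 2^ℕ (t ∈ T) in exactly one point, and a homeomorphic copy E of H inside 2^ℕ, such that E is not countably perfectly meager in 2^ℕ; in particular T is a continuous injective image of E. -/

import Mathlib

open Set

/-- An `Fσ` set: a countable union of closed sets. -/
def IsFsigma {X : Type*} [TopologicalSpace X] (F : Set X) : Prop :=
  ∃ s : ℕ → Set X, (∀ n, IsClosed (s n)) ∧ F = ⋃ n, s n

/-- A perfect set in the classical sense: nonempty, closed, without isolated points. -/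
def PerfectSet {X : Type*} [TopologicalSpace X] (P : Set X) : Prop :=
  Perfect P ∧ P.Nonempty

/-- A Cantor set: a subset homeomorphic to the Cantor space `2^ℕ`
(hence nonempty and compact). -/
def IsCantorSet {X : Type*} [TopologicalSpace X] (K : Set X) : Prop :=
  Nonempty ((ℕ → Bool) ≃ₜ K)

/-- `F` is meager relative to the subspace `P`. -/
def MeagerIn {X : Type*} [TopologicalSpace X] (F P : Set X) : Prop :=
  IsMeagre ((↑) ⁻¹' F : Set P)

/-- `A` is countably perfectly meager in `X`. -/
def CPM {X : Type*} [TopologicalSpace X] (A : Set X) : Prop :=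
  ∀ P : ℕ → Set X, (∀ n, PerfectSet (P n)) →
    ∃ F : Set X, IsFsigma F ∧ A ⊆ F ∧ ∀ n, MeagerIn F (P n)

/-!
Code `t ∈ 2^ℕ` by points `x` whose odd coordinates `x (2k+1)` are flags and whose even
coordinates `x (2k)` are data bits: `x` codes `t` when it has infinitely many flags and the data
bit at its `j`-th flag is `t j`. Reading off the data at the flags is continuous wherever there
are infinitely many flags.

A sleeve is a cylinder in which all later flags are switched off; sleeves form a countable family
of perfect sets. A closed set containing no sleeve can be avoided by first extending a coding
prefix inside a sleeve and then appending one correctly coded flag, so iterating over the closed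
pieces of an `Fσ` set that is meager in every sleeve produces a code of any `t` outside that set.
There are only `𝔠` many `Fσ` sets; indexing them by `T` and choosing for each `t ∈ T` a code of
`t` outside the `t`-th one (when it is meager in all sleeves) gives a set `E` that is not
countably perfectly meager and is mapped by decoding continuously and injectively onto `T`;
`H` is the graph of this map.
-/

open Set PiNat Cardinal

namespace PiNat

theorem cylinder_subset_cylinder {E : ℕ → Type*} {x y : ∀ n, E n} {m n : ℕ}
    (hy : y ∈ cylinder x n) (hnm : n ≤ m) : cylinder y m ⊆ cylinder x n :=
  (cylinder_anti y hnm).trans (mem_cylinder_iff_eq.1 hy).le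

variable {E : ℕ → Type*} [∀ n, TopologicalSpace (E n)] [∀ n, DiscreteTopology (E n)]

theorem isClosed_cylinder (x : ∀ n, E n) (n : ℕ) : IsClosed (cylinder x n) := by
  rw [cylinder_eq_pi]
  exact isClosed_set_pi fun _ _ => isClosed_discrete _

theorem exists_cylinder_subset_of_mem_nhds {x : ∀ n, E n} {U : Set (∀ n, E n)} (hU : U ∈ nhds x) :
    ∃ n, cylinder x n ⊆ U := by
  obtain ⟨_, ⟨y, n, rfl⟩, hxy, hsub⟩ := (isTopologicalBasis_cylinders E).mem_nhds_iff.1 hU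
  exact ⟨n, (mem_cylinder_iff_eq.1 hxy).le.trans hsub⟩

end PiNat

theorem mk_isFsigma_le_continuum {X : Type*} [TopologicalSpace X] [SecondCountableTopology X] :
    #{F : Set X // IsFsigma F} ≤ 𝔠 := by
  have hborel : {F : Set X | IsFsigma F} ⊆ {F | @MeasurableSet X (borel X) F} := by
    rintro _ ⟨s, hs, rfl⟩
    exact MeasurableSet.iUnion fun n =>
      (MeasurableSpace.measurableSet_generateFrom (hs n).isOpen_compl).of_compl
  refine (mk_le_mk_of_subset hborel).trans ?_
  rw [(TopologicalSpace.isBasis_countableBasis X).borel_eq_generateFrom]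
  exact MeasurableSpace.cardinal_measurableSet_le_continuum
    ((TopologicalSpace.countable_countableBasis X).le_aleph0.trans aleph0_le_continuum)

universe u

theorem exists_selection_not_CPM {X ι : Type u} [TopologicalSpace X] (P : ℕ → Set X)
    (hP : ∀ n, PerfectSet (P n)) (A : ι → Set X) (hcard : #{F : Set X // IsFsigma F} ≤ #ι)
    (hA : ∀ i F, IsFsigma F → (∀ n, MeagerIn F (P n)) → ¬ A i ⊆ F) :
    ∃ f : ι → X, (∀ i, f i ∈ A i) ∧ ¬ CPM (range f) := by
  classical
  have hempty : IsFsigma (∅ : Set X) := ⟨fun _ => ∅, fun _ => isClosed_empty, iUnion_empty.symm⟩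
  have : Nonempty {F : Set X // IsFsigma F} := ⟨⟨∅, hempty⟩⟩
  obtain ⟨e⟩ := (le_def _ _).1 hcard
  have hpick : ∀ i, ∃ x ∈ A i,
      (∀ n, MeagerIn (Function.invFun e i).1 (P n)) → x ∉ (Function.invFun e i).1 := by
    intro i
    by_cases hi : ∀ n, MeagerIn (Function.invFun e i).1 (P n)
    · obtain ⟨x, hxA, hx⟩ := not_subset.1 (hA i _ (Function.invFun e i).2 hi)
      exact ⟨x, hxA, fun _ => hx⟩
    · obtain ⟨x, hx⟩ := nonempty_iff_ne_empty.2 fun h =>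
        hA i ∅ hempty (fun n => by simp [MeagerIn, IsMeagre.empty]) h.le
      exact ⟨x, hx, fun h => (hi h).elim⟩
  choose f hfA hf using hpick
  refine ⟨f, hfA, fun hCPM => ?_⟩
  obtain ⟨F, hF, hfF, hmeager⟩ := hCPM P hP
  have hfi := hf (e ⟨F, hF⟩)
  rw [Function.leftInverse_invFun e.injective] at hfi
  exact hfi hmeager (hfF (mem_range_self _))

namespace FlagCoding

def IsFlag (x : ℕ → Bool) (k : ℕ) : Prop := x (2 * k + 1) = true

instance (x : ℕ → Bool) : DecidablePred (IsFlag x) := fun k =>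
  inferInstanceAs (Decidable (x (2 * k + 1) = true))

def CodesBelow (t x : ℕ → Bool) (n : ℕ) : Prop :=
  ∀ k, 2 * k + 1 < n → IsFlag x k → x (2 * k) = t (Nat.count (IsFlag x) k)

def codeFiber (t : ℕ → Bool) : Set (ℕ → Bool) :=
  {x | {k | IsFlag x k}.Infinite ∧ ∀ n, CodesBelow t x n}

-- Junk unless `x` has infinitely many flags: `Nat.nth` is `0` past the last one.
noncomputable def decode (x : ℕ → Bool) (n : ℕ) : Bool := x (2 * Nat.nth (IsFlag x) n)

def sleeve (y : ℕ → Bool) (n : ℕ) : Set (ℕ → Bool) :=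
  cylinder y n ∩ {z | ∀ k, n ≤ 2 * k + 1 → z (2 * k + 1) = false}

def addFlag (t z : ℕ → Bool) (m : ℕ) : ℕ → Bool :=
  Function.update (Function.update z (2 * m) (t (Nat.count (IsFlag z) m))) (2 * m + 1) true

variable {t x y z : ℕ → Bool} {k m n : ℕ}

theorem isFlag_iff_of_mem_cylinder (hz : z ∈ cylinder x n) (hk : 2 * k + 1 < n) :
    IsFlag z k ↔ IsFlag x k := by
  rw [IsFlag, IsFlag, mem_cylinder_iff.1 hz _ hk]

theorem count_isFlag_eq_of_mem_cylinder (hz : z ∈ cylinder x n) (hk : 2 * k ≤ n) :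
    Nat.count (IsFlag z) k = Nat.count (IsFlag x) k := by
  simp only [Nat.count_eq_card_filter_range]
  congr 1
  exact Finset.filter_congr fun j hj =>
    isFlag_iff_of_mem_cylinder hz (by rw [Finset.mem_range] at hj; omega)

theorem CodesBelow.of_mem_cylinder (h : CodesBelow t y n) (hz : z ∈ cylinder y n) :
    CodesBelow t z n := by
  intro k hk hflag
  rw [mem_cylinder_iff.1 hz _ (by omega), count_isFlag_eq_of_mem_cylinder hz (by omega)]
  exact h k hk ((isFlag_iff_of_mem_cylinder hz hk).1 hflag)

theorem CodesBelow.mono (h : CodesBelow t x n) (hmn : m ≤ n) : CodesBelow t x m :=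
  fun k hk => h k (hk.trans_le hmn)

theorem CodesBelow.of_mem_sleeve (h : CodesBelow t y n) (hz : z ∈ sleeve y n) (m : ℕ) :
    CodesBelow t z m := by
  intro k _ hflag
  have hk : 2 * k + 1 < n := by
    by_contra hk
    simp [IsFlag, hz.2 k (not_lt.1 hk)] at hflag
  exact h.of_mem_cylinder hz.1 k hk hflag

theorem addFlag_mem_cylinder (t z : ℕ → Bool) (m : ℕ) : addFlag t z m ∈ cylinder z (2 * m) :=
  mem_cylinder_iff.2 fun i hi => by
    rw [addFlag, Function.update_of_ne (by omega), Function.update_of_ne (by omega)]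

theorem isFlag_addFlag (t z : ℕ → Bool) (m : ℕ) : IsFlag (addFlag t z m) m := by
  simp [IsFlag, addFlag]

theorem codesBelow_addFlag (h : CodesBelow t z (2 * m)) :
    CodesBelow t (addFlag t z m) (2 * m + 2) := by
  have hcyl := addFlag_mem_cylinder t z m
  intro k hk hflag
  rcases (show k ≤ m by omega).lt_or_eq with hkm | rfl
  · exact h.of_mem_cylinder hcyl k (by omega) hflag
  · rw [count_isFlag_eq_of_mem_cylinder hcyl le_rfl]
    simp [addFlag]

theorem CodesBelow.exists_extension_disjoint {C : Set (ℕ → Bool)} (hC : IsClosed C)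
    (hsleeve : ¬ sleeve y n ⊆ C) (h : CodesBelow t y n) :
    ∃ y' n', n < n' ∧ cylinder y' n' ⊆ cylinder y n ∧ CodesBelow t y' n' ∧
      Disjoint (cylinder y' n') C ∧ ∃ k, n ≤ 2 * k + 1 ∧ 2 * k + 1 < n' ∧ IsFlag y' k := by
  obtain ⟨z, hz, hzC⟩ := not_subset.1 hsleeve
  obtain ⟨N, hN⟩ := exists_cylinder_subset_of_mem_nhds (hC.isOpen_compl.mem_nhds hzC)
  set m := N + n
  have hcyl := addFlag_mem_cylinder t z m
  refine ⟨addFlag t z m, 2 * m + 2, by omega, ?_, codesBelow_addFlag (h.of_mem_sleeve hz _), ?_,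
    m, by omega, by omega, isFlag_addFlag t z m⟩
  · exact (cylinder_subset_cylinder hcyl (by omega)).trans
      (cylinder_subset_cylinder hz.1 (by omega))
  · exact subset_compl_iff_disjoint_right.1 <|
      (cylinder_subset_cylinder (cylinder_anti z (by omega) hcyl) (by omega)).trans hN

theorem exists_mem_codeFiber_forall_notMem (t : ℕ → Bool) {C : ℕ → Set (ℕ → Bool)}
    (hC : ∀ j, IsClosed (C j)) (hsleeve : ∀ j y n, ¬ sleeve y n ⊆ C j) :
    ∃ x ∈ codeFiber t, ∀ j, x ∉ C j := by
  have step : ∀ j (p : (ℕ → Bool) × ℕ), CodesBelow t p.1 p.2 → ∃ q : (ℕ → Bool) × ℕ,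
      p.2 < q.2 ∧ cylinder q.1 q.2 ⊆ cylinder p.1 p.2 ∧ CodesBelow t q.1 q.2 ∧
      Disjoint (cylinder q.1 q.2) (C j) ∧
      ∃ k, p.2 ≤ 2 * k + 1 ∧ 2 * k + 1 < q.2 ∧ IsFlag q.1 k := fun j p hp =>
    let ⟨y', n', h⟩ := hp.exists_extension_disjoint (hC j) (hsleeve j p.1 p.2)
    ⟨(y', n'), h⟩
  choose! next hlt hsub hcodes hdisj hflag using step
  let stage : ℕ → (ℕ → Bool) × ℕ := fun j => Nat.rec (fun _ => false, 0) (fun j p => next j p) j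
  have hstage : ∀ j, CodesBelow t (stage j).1 (stage j).2 := fun j => by
    induction j with
    | zero => exact fun k hk => absurd hk (Nat.not_lt_zero _)
    | succ j ih => exact hcodes j _ ih
  have hlen : ∀ j, j ≤ (stage j).2 := fun j => by
    induction j with
    | zero => exact le_rfl
    | succ j ih => exact (hlt j _ (hstage j)).trans_le' (by omega)
  obtain ⟨x, hx⟩ := IsCompact.nonempty_iInter_of_sequence_nonempty_isCompact_isClosed
    (fun j => cylinder (stage j).1 (stage j).2) (fun j => hsub j _ (hstage j))
    (fun j => ⟨_, self_mem_cylinder _ _⟩) (isClosed_cylinder _ _).isCompact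
    (fun j => isClosed_cylinder _ _)
  rw [mem_iInter] at hx
  refine ⟨x, ⟨infinite_of_forall_exists_gt fun a => ?_,
    fun n => ((hstage n).of_mem_cylinder (hx n)).mono (hlen n)⟩,
    fun j hxC => (hdisj j _ (hstage j)).notMem_of_mem_left (hx (j + 1)) hxC⟩
  obtain ⟨k, hk, hk', hflagk⟩ := hflag (2 * a + 2) (stage (2 * a + 2)) (hstage (2 * a + 2))
  exact ⟨k, (isFlag_iff_of_mem_cylinder (hx (2 * a + 3)) hk').2 hflagk,
    by linarith [hlen (2 * a + 2)]⟩

theorem isClosed_sleeve (y : ℕ → Bool) (n : ℕ) : IsClosed (sleeve y n) := by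
  refine (isClosed_cylinder y n).inter ?_
  simp only [ofPred_forall]
  exact isClosed_iInter fun _ => isClosed_iInter fun _ =>
    isClosed_eq (continuous_apply _) continuous_const

theorem perfectSet_sleeve (y : ℕ → Bool) (n : ℕ) : PerfectSet (sleeve y n) := by
  refine ⟨⟨isClosed_sleeve y n, fun z hz => accPt_iff_nhds.2 fun U hU => ?_⟩,
    ⟨fun i => if i < n then y i else false, mem_cylinder_iff.2 fun i hi => if_pos hi,
      fun k hk => if_neg (by omega)⟩⟩
  obtain ⟨N, hN⟩ := exists_cylinder_subset_of_mem_nhds hU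
  set m := N + n
  have hcyl := update_mem_cylinder z (2 * m) (!z (2 * m))
  refine ⟨Function.update z (2 * m) (!z (2 * m)), ⟨hN (cylinder_anti z (by omega) hcyl),
    cylinder_subset_cylinder hz.1 (by omega) hcyl, fun k hk => ?_⟩, fun h => ?_⟩
  · rw [Function.update_of_ne (by omega)]
    exact hz.2 k hk
  · simpa using congrFun h (2 * m)

theorem not_meagerIn_sleeve_of_subset {F : Set (ℕ → Bool)} (h : sleeve y n ⊆ F) :
    ¬ MeagerIn F (sleeve y n) := by
  have : CompactSpace (sleeve y n) :=
    isCompact_iff_compactSpace.1 (isClosed_sleeve y n).isCompact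
  have : Nonempty (sleeve y n) := (perfectSet_sleeve y n).2.to_subtype
  rw [MeagerIn, preimage_eq_univ_iff.2 (by rwa [Subtype.range_coe])]
  exact not_isMeagre_of_isOpen isOpen_univ univ_nonempty

theorem sleeve_eq_of_mem_cylinder (h : z ∈ cylinder y n) : sleeve z n = sleeve y n := by
  rw [sleeve, sleeve, mem_cylinder_iff_eq.1 h]

theorem exists_perfectSet_seq_eq_sleeve :
    ∃ P : ℕ → Set (ℕ → Bool), (∀ m, PerfectSet (P m)) ∧ ∀ y n, ∃ m, P m = sleeve y n := by
  obtain ⟨e, he⟩ := exists_surjective_nat (Σ n, Fin n → Bool)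
  refine ⟨fun m => sleeve (fun i => if h : i < (e m).1 then (e m).2 ⟨i, h⟩ else false) (e m).1,
    fun m => perfectSet_sleeve _ _, fun y n => ?_⟩
  obtain ⟨m, hm⟩ := he ⟨n, fun i => y i⟩
  refine ⟨m, ?_⟩
  dsimp only
  rw [hm]
  exact sleeve_eq_of_mem_cylinder (mem_cylinder_iff.2 fun i hi => dif_pos hi)

theorem codeFiber_not_subset (t : ℕ → Bool) {F : Set (ℕ → Bool)} (hF : IsFsigma F)
    (hmeager : ∀ y n, MeagerIn F (sleeve y n)) : ¬ codeFiber t ⊆ F := by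
  obtain ⟨C, hC, rfl⟩ := hF
  obtain ⟨x, hx, hxC⟩ := exists_mem_codeFiber_forall_notMem t hC fun j y n h =>
    not_meagerIn_sleeve_of_subset (h.trans (subset_iUnion C j)) (hmeager y n)
  intro h
  obtain ⟨j, hj⟩ := mem_iUnion.1 (h hx)
  exact hxC j hj

theorem decode_eq_of_mem_codeFiber (hx : x ∈ codeFiber t) : decode x = t := by
  funext n
  rw [decode, hx.2 _ _ (Nat.lt_succ_self _) (Nat.nth_mem_of_infinite hx.1 n),
    Nat.count_nth_of_infinite hx.1]

theorem decode_apply_eq_of_mem_cylinder (hx : {k | IsFlag x k}.Infinite) (n : ℕ)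
    (hz : z ∈ cylinder x (2 * Nat.nth (IsFlag x) n + 2)) : decode z n = decode x n := by
  set k := Nat.nth (IsFlag x) n
  have hflag : IsFlag z k :=
    (isFlag_iff_of_mem_cylinder hz (by omega)).2 (Nat.nth_mem_of_infinite hx n)
  have hcount : Nat.count (IsFlag z) k = n := by
    rw [count_isFlag_eq_of_mem_cylinder hz (by omega), Nat.count_nth_of_infinite hx]
  have hnth : Nat.nth (IsFlag z) n = k := hcount ▸ Nat.nth_count hflag
  rw [decode, decode, hnth, mem_cylinder_iff.1 hz _ (by omega)]

theorem continuousAt_decode (hx : {k | IsFlag x k}.Infinite) : ContinuousAt decode x :=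
  continuousAt_pi.2 fun n => continuousAt_const.congr <|
    Filter.mem_of_superset ((isOpen_cylinder _ x _).mem_nhds (self_mem_cylinder _ _))
      fun _ hz => (decode_apply_eq_of_mem_cylinder hx n hz).symm

theorem exists_continuous_injective_not_CPM (T : Set (ℕ → Bool)) (hT : #T = 𝔠) :
    ∃ (E : Set (ℕ → Bool)) (g : E → ℕ → Bool),
      ¬ CPM E ∧ Continuous g ∧ Function.Injective g ∧ range g = T := by
  obtain ⟨P, hP, hsleeve⟩ := exists_perfectSet_seq_eq_sleeve
  obtain ⟨f, hfA, hf⟩ := exists_selection_not_CPM P hP (fun t : T => codeFiber t)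
    (hT ▸ mk_isFsigma_le_continuum) fun t F hF hmeager => codeFiber_not_subset t hF
      fun y n => (hsleeve y n).elim fun m hm => hm ▸ hmeager m
  have hdecode : ∀ t, decode (f t) = t := fun t => decode_eq_of_mem_codeFiber (hfA t)
  have hcont : ContinuousOn decode (range f) := by
    rintro _ ⟨t, rfl⟩
    exact (continuousAt_decode (hfA t).1).continuousWithinAt
  refine ⟨range f, fun e => decode e, hf, hcont.domRestrict, ?_, ?_⟩
  · rintro ⟨_, t₁, rfl⟩ ⟨_, t₂, rfl⟩ h
    obtain rfl : t₁ = t₂ := Subtype.ext ((hdecode t₁).symm.trans (h.trans (hdecode t₂)))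
    rfl
  · ext s
    refine ⟨?_, fun hs => ⟨⟨f ⟨s, hs⟩, mem_range_self _⟩, hdecode _⟩⟩
    rintro ⟨⟨_, t, rfl⟩, rfl⟩
    simp only [hdecode t, Subtype.coe_prop]

end FlagCoding

theorem stmt14 (T : Set (ℕ → Bool)) (hT : Cardinal.mk T = Cardinal.continuum) :
    ∃ H : Set ((ℕ → Bool) × (ℕ → Bool)),
      (∀ p ∈ H, p.1 ∈ T) ∧
      (∀ t ∈ T, ∃! y : ℕ → Bool, (t, y) ∈ H) ∧
      ∃ E : Set (ℕ → Bool), Nonempty (H ≃ₜ E) ∧ ¬ CPM E ∧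
        ∃ g : E → (ℕ → Bool), Continuous g ∧ Function.Injective g ∧
          Set.range g = T := by
  obtain ⟨E, g, hE, hg, hinj, hrange⟩ := FlagCoding.exists_continuous_injective_not_CPM T hT
  have hgraph : Topology.IsEmbedding fun e : E => (g e, (e : ℕ → Bool)) :=
    .of_comp (hg.prodMk continuous_subtype_val) continuous_snd .subtypeVal
  refine ⟨range fun e : E => (g e, (e : ℕ → Bool)), ?_, fun t ht => ?_, E,
    ⟨hgraph.toHomeomorph.symm⟩, hE, g, hg, hinj, hrange⟩
  · rintro _ ⟨e, rfl⟩
    exact hrange ▸ mem_range_self e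
  · obtain ⟨e, rfl⟩ := hrange ▸ ht
    refine ⟨e, ⟨e, rfl⟩, ?_⟩
    rintro _ ⟨e', he'⟩
    rw [Prod.mk.injEq] at he'
    rw [← he'.2, hinj he'.1]
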